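/- arXiv:2312.05628 — 2 statements merged into one kernel-verified Lean document; each statement's English description precedes it below -/
import Mathlib

section
/- Assuming for all t ≥ 2657 that |θ(t) - t| ≤ (√t · log t · (log t - log log t))/(8π), one has for all x ≥ 10^19: (log x)(log x - log log x)/(8π√x) + ∫ₓ^∞ (log t)(log t - log log t)/(8π t^{3/2}) dt < 3(log x)²/(8π√x). -/
/-!
Since `log ∘ log` is increasing, for `t ≥ x` the integrand is at most
`log t (log t - c) / (8π t^{3/2})` with `c = log log x`, and this majorant has the explicit
antiderivative `-(2 log² t + (8 - 2c) log t + 16 - 4c) / (8π √t)`. The claim then reduces to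
`(3c - 8) log x + 4c > 16`, which holds as soon as `c ≥ 3`.
-/

open Real Finset

noncomputable def chebyshevTheta (x : ℝ) : ℝ :=
  ∑ p ∈ (Finset.range (⌊x⌋₊ + 1)).filter Nat.Prime, Real.log p

open Filter MeasureTheory Topology

lemma tendsto_log_pow_div_sqrt_atTop (n : ℕ) :
    Tendsto (fun u => log u ^ n / √u) atTop (𝓝 0) := by
  refine (isLittleO_log_rpow_rpow_atTop n one_half_pos).tendsto_div_nhds_zero.congr' ?_
  filter_upwards [eventually_ge_atTop 0] with u hu
  rw [rpow_natCast, ← sqrt_eq_rpow]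

lemma tendsto_quadratic_log_div_sqrt_atTop (a b d : ℝ) :
    Tendsto (fun u => (a * log u ^ 2 + b * log u + d) / √u) atTop (𝓝 0) := by
  have h := (((tendsto_log_pow_div_sqrt_atTop 2).const_mul a).add
    ((tendsto_log_pow_div_sqrt_atTop 1).const_mul b)).add
    ((tendsto_log_pow_div_sqrt_atTop 0).const_mul d)
  simp only [mul_zero, add_zero] at h
  refine h.congr fun u => ?_
  simp only [pow_one, pow_zero]
  ring

lemma hasDerivAt_quadratic_log_div_sqrt (c : ℝ) {t : ℝ} (ht : 0 < t) :
    HasDerivAt (fun u => -((2 * log u ^ 2 + (8 - 2 * c) * log u + (16 - 4 * c)) / √u))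
      (log t * (log t - c) / t ^ ((3 : ℝ) / 2)) t := by
  have hlog := hasDerivAt_log ht.ne'
  have hnum := (((hlog.pow 2).const_mul 2).add (hlog.const_mul (8 - 2 * c))).add_const
    (16 - 4 * c)
  refine (hnum.div (hasDerivAt_sqrt ht.ne') (sqrt_pos.2 ht).ne').neg.congr_deriv ?_
  have h32 : t ^ ((3 : ℝ) / 2) = t * √t := by
    rw [show (3 : ℝ) / 2 = 1 + 1 / 2 by norm_num, rpow_add ht, rpow_one, ← sqrt_eq_rpow]
  have hs : √t ^ 2 = t := sq_sqrt ht.le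
  simp only [Pi.add_apply, Pi.pow_apply]
  generalize log t = l
  rw [h32]
  set s := √t
  rw [← hs]
  field_simp
  ring

lemma integral_Ioi_log_mul_log_sub_div_rpow {c x : ℝ} (hx : 1 ≤ x) (hc : c ≤ log x) :
    IntegrableOn (fun t => log t * (log t - c) / t ^ ((3 : ℝ) / 2)) (Set.Ioi x) ∧
      ∫ t in Set.Ioi x, log t * (log t - c) / t ^ ((3 : ℝ) / 2)
        = (2 * log x ^ 2 + (8 - 2 * c) * log x + (16 - 4 * c)) / √x := by
  have hderiv : ∀ t ∈ Set.Ici x, HasDerivAt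
      (fun u => -((2 * log u ^ 2 + (8 - 2 * c) * log u + (16 - 4 * c)) / √u))
      (log t * (log t - c) / t ^ ((3 : ℝ) / 2)) t :=
    fun t ht => hasDerivAt_quadratic_log_div_sqrt c (by linarith [ht.out])
  have hnonneg : ∀ t ∈ Set.Ioi x, 0 ≤ log t * (log t - c) / t ^ ((3 : ℝ) / 2) := by
    intro t ht
    have ht0 : 0 < t := by linarith [ht.out]
    have hxt : log x ≤ log t := log_le_log (by linarith) ht.out.le
    have : 0 ≤ log t := (log_nonneg hx).trans hxt
    have : 0 ≤ log t - c := by linarith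
    positivity
  have hlim := (tendsto_quadratic_log_div_sqrt_atTop 2 (8 - 2 * c) (16 - 4 * c)).neg
  rw [neg_zero] at hlim
  refine ⟨integrableOn_Ioi_deriv_of_nonneg' hderiv hnonneg hlim, ?_⟩
  rw [integral_Ioi_of_hasDerivAt_of_nonneg' hderiv hnonneg hlim]
  ring

lemma log_mul_log_sub_log_log_nonneg {t : ℝ} (ht : 1 ≤ t) :
    0 ≤ log t * (log t - log (log t)) :=
  mul_nonneg (log_nonneg ht) (sub_nonneg.2 (log_le_self (log_nonneg ht)))

lemma log_mul_log_sub_log_log_le {x t : ℝ} (hx : 1 < x) (hxt : x ≤ t) :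
    log t * (log t - log (log t)) ≤ log t * (log t - log (log x)) := by
  have hlog : log x ≤ log t := log_le_log (by linarith) hxt
  have hloglog : log (log x) ≤ log (log t) := log_le_log (log_pos hx) hlog
  exact mul_le_mul_of_nonneg_left (by linarith) ((log_pos hx).le.trans hlog)

lemma integral_Ioi_log_mul_log_sub_log_log_div_le {x : ℝ} (hx : 1 < x) :
    ∫ t in Set.Ioi x, log t * (log t - log (log t)) / (8 * π * t ^ ((3 : ℝ) / 2))
      ≤ (2 * log x ^ 2 + (8 - 2 * log (log x)) * log x + (16 - 4 * log (log x)))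
          / (8 * π * √x) := by
  obtain ⟨hint, hval⟩ :=
    integral_Ioi_log_mul_log_sub_div_rpow hx.le (log_le_self (log_nonneg hx.le))
  calc _ ≤ ∫ t in Set.Ioi x,
          log t * (log t - log (log x)) / t ^ ((3 : ℝ) / 2) / (8 * π) := by
        refine integral_mono_of_nonneg ?_ (hint.div_const _) ?_
        · filter_upwards [ae_restrict_mem measurableSet_Ioi] with t ht
          have ht0 : 0 < t := by linarith [ht.out]
          have := log_mul_log_sub_log_log_nonneg (hx.trans ht.out).le
          positivity
        · filter_upwards [ae_restrict_mem measurableSet_Ioi] with t ht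
          have ht0 : 0 < t := by linarith [ht.out]
          rw [div_div, mul_comm (t ^ _)]
          gcongr ?_ / _
          exact log_mul_log_sub_log_log_le hx ht.out.le
    _ = _ := by rw [integral_div, hval, div_div, mul_comm √x]

theorem mertens_first_tail_estimate_general :
    ∀ x : ℝ, 1e19 ≤ x →
      Real.log x * (Real.log x - Real.log (Real.log x)) / (8 * π * Real.sqrt x)
        + ∫ t in Set.Ioi x,
            Real.log t * (Real.log t - Real.log (Real.log t)) / (8 * π * t ^ ((3 : ℝ) / 2))
        < 3 * (Real.log x) ^ 2 / (8 * π * Real.sqrt x) := by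
  intro x hx
  have hexp : exp 1 < 3 := exp_one_lt_d9.trans (by norm_num)
  have hL : 27 ≤ log x := by
    rw [le_log_iff_exp_le (by linarith)]
    calc exp 27 = exp 1 ^ 27 := by rw [← exp_nat_mul]; norm_num
      _ ≤ 3 ^ 27 := by gcongr
      _ ≤ x := by norm_num at hx ⊢; linarith
  have hc : 3 ≤ log (log x) := by
    rw [le_log_iff_exp_le (by linarith)]
    calc exp 3 = exp 1 ^ 3 := by rw [← exp_nat_mul]; norm_num
      _ ≤ 3 ^ 3 := by gcongr
      _ ≤ log x := by linarith
  have hx1 : 1 < x := by norm_num at hx ⊢; linarith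
  calc _ ≤ log x * (log x - log (log x)) / (8 * π * √x)
        + (2 * log x ^ 2 + (8 - 2 * log (log x)) * log x + (16 - 4 * log (log x)))
          / (8 * π * √x) := by
        gcongr
        exact integral_Ioi_log_mul_log_sub_log_log_div_le hx1
    _ < 3 * log x ^ 2 / (8 * π * √x) := by
        rw [← add_div]
        gcongr
        nlinarith

theorem mertens_first_tail_estimate
    (htheta : ∀ t : ℝ, 2657 ≤ t →
      |chebyshevTheta t - t| ≤
        Real.sqrt t * Real.log t * (Real.log t - Real.log (Real.log t)) / (8 * π)) :
    ∀ x : ℝ, 1e19 ≤ x →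
      Real.log x * (Real.log x - Real.log (Real.log x)) / (8 * π * Real.sqrt x)
        + ∫ t in Set.Ioi x,
            Real.log t * (Real.log t - Real.log (Real.log t)) / (8 * π * t ^ ((3 : ℝ) / 2))
        < 3 * (Real.log x) ^ 2 / (8 * π * Real.sqrt x) :=
  mertens_first_tail_estimate_general
end

section
/- If |θ(x) - x| ≤ 1.95√x for all 1423 ≤ x ≤ 10^19, and if for x ≥ 10^19 one has |θ(x)-x| ≤ √x(log x)²/(8π), then for all 10^6 ≤ x ≤ 10^19: 1.95(1/√x + ∫ₓ^{10^19} dt/t^{3/2}) + (1/(8π))∫_{10^19}^∞ (log t)²/t^{3/2} dt < 3(log x)²/(8π√x). -/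
/-!
Both integrals are elementary: `1 / t ^ (3/2)` has primitive `-2 / √t`, and `log t ^ 2 / t ^ (3/2)`
has primitive `-(2 log² t + 8 log t + 16) / √t`. Multiplying by `8π√x`, the claim becomes
`46.8π + (K - 31.2π) √x/√X < 3 log² x` with `X = 10¹⁹` and `K = 2 log² X + 8 log X + 16`.
Since `log² t / √t` decreases on `[e⁴, ∞)`, we have `log² X · √x/√X ≤ log² x`; writing
`3 log² x = 0.78 log² x + 2.22 log² x`, the first part beats `46.8π` because `x ≥ 10⁶` and the
second beats `(K - 31.2π) √x/√X` by the decay bound.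
-/

open Real Finset

open Filter Topology

theorem integral_Ioi_inter_Iic_one_div_rpow_three_halves {a b : ℝ} (ha : 0 < a) (hab : a ≤ b) :
    ∫ t in Set.Ioi a ∩ Set.Iic b, 1 / t ^ ((3 : ℝ) / 2) = 2 / √a - 2 / √b := by
  rw [Set.Ioi_inter_Iic, ← intervalIntegral.integral_of_le hab]
  calc ∫ t in a..b, 1 / t ^ ((3 : ℝ) / 2) = ∫ t in a..b, t ^ (-(3 : ℝ) / 2) :=
        intervalIntegral.integral_congr fun t ht => by
          rw [neg_div, rpow_neg (ha.trans_le (Set.uIcc_of_le hab ▸ ht).1).le, one_div]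
    _ = 2 / √a - 2 / √b := by
      rw [integral_rpow (Or.inr ⟨by norm_num, Set.notMem_uIcc_of_lt ha (ha.trans_le hab)⟩),
        show -(3 : ℝ) / 2 + 1 = -(1 / 2) by norm_num, rpow_neg (ha.trans_le hab).le,
        rpow_neg ha.le, ← sqrt_eq_rpow, ← sqrt_eq_rpow]
      ring

theorem hasDerivAt_log_sq_primitive {t : ℝ} (ht : 0 < t) :
    HasDerivAt (fun t => -(2 * log t ^ 2 + 8 * log t + 16) / √t)
      (log t ^ 2 / t ^ ((3 : ℝ) / 2)) t := by
  have hlog := hasDerivAt_log ht.ne'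
  have hpoly : HasDerivAt (fun t => 2 * log t ^ 2 + 8 * log t + 16) ((4 * log t + 8) / t) t := by
    refine ((((hlog.fun_pow 2).const_mul 2).fun_add (hlog.const_mul 8)).add_const 16).congr_deriv ?_
    norm_num
    ring
  refine (hpoly.fun_neg.div (hasDerivAt_sqrt ht.ne') (sqrt_pos.mpr ht).ne').congr_deriv ?_
  rw [show (3 : ℝ) / 2 = 1 + 1 / 2 by norm_num, rpow_add ht, rpow_one, ← sqrt_eq_rpow]
  field_simp
  rw [sq_sqrt ht.le]
  ring

theorem tendsto_log_sq_primitive_atTop :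
    Tendsto (fun t => -(2 * log t ^ 2 + 8 * log t + 16) / √t) atTop (𝓝 0) := by
  have hsq : Tendsto (fun t => log t ^ 2 / √t) atTop (𝓝 0) := by
    simpa [sqrt_eq_rpow] using
      (isLittleO_log_rpow_rpow_atTop 2 (one_half_pos : (0 : ℝ) < 1 / 2)).tendsto_div_nhds_zero
  have hlin : Tendsto (fun t => log t / √t) atTop (𝓝 0) := by
    simpa [sqrt_eq_rpow] using
      (isLittleO_log_rpow_atTop (one_half_pos : (0 : ℝ) < 1 / 2)).tendsto_div_nhds_zero
  have hconst : Tendsto (fun t => 1 / √t) atTop (𝓝 0) := by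
    simpa [Function.comp_def] using tendsto_inv_atTop_zero.comp tendsto_sqrt_atTop
  have := (((hsq.const_mul 2).add (hlin.const_mul 8)).add (hconst.const_mul 16)).neg
  simp only [mul_zero, add_zero, neg_zero] at this
  exact this.congr fun t => by ring

theorem integral_Ioi_log_sq_div_rpow_three_halves {a : ℝ} (ha : 0 < a) :
    ∫ t in Set.Ioi a, log t ^ 2 / t ^ ((3 : ℝ) / 2) = (2 * log a ^ 2 + 8 * log a + 16) / √a := by
  rw [MeasureTheory.integral_Ioi_of_hasDerivAt_of_nonneg'
    (fun t ht => hasDerivAt_log_sq_primitive (ha.trans_le ht))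
    (fun t ht => by have : 0 < t := ha.trans ht; positivity) tendsto_log_sq_primitive_atTop]
  ring

theorem log_sq_div_sqrt_antitoneOn : AntitoneOn (fun x => log x ^ 2 / √x) (Set.Ici (exp 4)) := by
  have hquarter : AntitoneOn (fun x => log x / x ^ (1 / 4 : ℝ)) (Set.Ici (exp 4)) := by
    convert log_div_self_rpow_antitoneOn (a := 1 / 4) (by norm_num) using 3
    norm_num
  have hsq {z : ℝ} (hz : exp 4 ≤ z) : log z ^ 2 / √z = (log z / z ^ (1 / 4 : ℝ)) ^ 2 := by
    rw [div_pow, ← rpow_natCast (z ^ _), ← rpow_mul (exp_pos 4 |>.le.trans hz), sqrt_eq_rpow]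
    norm_num
  intro x hx y hy hxy
  have hy0 : 0 ≤ log y / y ^ (1 / 4 : ℝ) := by
    have : 0 < y := (exp_pos 4).trans_le hy
    have : 0 ≤ log y := log_nonneg ((one_le_exp (by norm_num)).trans hy)
    positivity
  simp only [hsq hx, hsq hy]
  exact pow_le_pow_left₀ hy0 (hquarter hx hy hxy) 2

theorem log_ten_gt : 2.3025 < log 10 := by
  rw [log_ten_eq]; linarith [log_two_gt_d9, log_five_gt_d9]

theorem log_ten_lt : log 10 < 2.3026 := by
  rw [log_ten_eq]; linarith [log_two_lt_d9, log_five_lt_d9]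

theorem intermediate_range_estimate_general :
    ∀ x : ℝ, 1e6 ≤ x → x ≤ 1e19 →
      1.95 * (1 / Real.sqrt x + ∫ t in Set.Ioi x ∩ Set.Iic (1e19 : ℝ),
          1 / t ^ ((3 : ℝ) / 2))
        + (1 / (8 * π)) * ∫ t in Set.Ioi (1e19 : ℝ), (Real.log t) ^ 2 / t ^ ((3 : ℝ) / 2)
        < 3 * (Real.log x) ^ 2 / (8 * π * Real.sqrt x) := by
  intro x hx₁ hx₂
  have hx : 0 < x := by linarith
  rw [integral_Ioi_inter_Iic_one_div_rpow_three_halves hx hx₂,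
    integral_Ioi_log_sq_div_rpow_three_halves (by norm_num)]
  have hlog_x : 13.8 ≤ log x := by
    have : log 1e6 ≤ log x := log_le_log (by norm_num) hx₁
    rw [show (1e6 : ℝ) = 10 ^ 6 by norm_num, log_pow, Nat.cast_ofNat] at this
    linarith [log_ten_gt]
  have hlog_X : 43.7 ≤ log 1e19 ∧ log 1e19 ≤ 43.8 := by
    rw [show (1e19 : ℝ) = 10 ^ 19 by norm_num, log_pow]
    constructor <;> linarith [log_ten_gt, log_ten_lt]
  have hdecay : log 1e19 ^ 2 * (√x / √1e19) ≤ log x ^ 2 := by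
    have hexp : exp 4 ≤ x := (le_log_iff_exp_le hx).mp (by linarith)
    have := log_sq_div_sqrt_antitoneOn hexp (hexp.trans hx₂) hx₂
    rw [div_le_div_iff₀ (by positivity) (by positivity)] at this
    rw [mul_div_assoc', div_le_iff₀ (by positivity)]
    linarith
  have hr₀ : 0 ≤ √x / √1e19 := by positivity
  rw [lt_div_iff₀ (by positivity)]
  calc _ = 46.8 * π + (2 * log 1e19 ^ 2 + 8 * log 1e19 + 16 - 31.2 * π) * (√x / √1e19) := by
        field_simp
        ring
    _ < 3 * log x ^ 2 := by
      have hcoeff : 8 * log 1e19 + 16 - 31.2 * π ≤ 0.22 * log 1e19 ^ 2 := by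
        nlinarith [pi_gt_d2]
      nlinarith [mul_le_mul_of_nonneg_right hcoeff hr₀, pi_lt_d2]

theorem intermediate_range_estimate
    (h1 : ∀ x : ℝ, 1423 ≤ x → x ≤ 1e19 → |chebyshevTheta x - x| ≤ 1.95 * Real.sqrt x)
    (h2 : ∀ x : ℝ, 1e19 ≤ x →
      |chebyshevTheta x - x| ≤ Real.sqrt x * (Real.log x) ^ 2 / (8 * π)) :
    ∀ x : ℝ, 1e6 ≤ x → x ≤ 1e19 →
      1.95 * (1 / Real.sqrt x + ∫ t in Set.Ioi x ∩ Set.Iic (1e19 : ℝ),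
          1 / t ^ ((3 : ℝ) / 2))
        + (1 / (8 * π)) * ∫ t in Set.Ioi (1e19 : ℝ), (Real.log t) ^ 2 / t ^ ((3 : ℝ) / 2)
        < 3 * (Real.log x) ^ 2 / (8 * π * Real.sqrt x) :=
  intermediate_range_estimate_general
end
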